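/- Let A, B be positive reals and c₁, c₂ real numbers. For any two positive reals N₁, N₂, the unique minimizer over x ∈ (0, ∞) of x ↦ N₁^{-1/4}·(A·x^{1/4} + B·x^{-1/4}) + c₁ coincides with the unique minimizer over x ∈ (0, ∞) of x ↦ N₂^{-1/4}·(A·x^{1/4} + B·x^{-1/4}) + c₂; both equal B²/A². That is, the optimal class-to-sample ratio is invariant to the size of the pre-training dataset. -/

import Mathlib

/-!
With `t = x ^ (1/4)` the bound becomes `A t + B / t`. Writing `B = A s²` with `s = √(B/A)`,
one has `A t + B / t - (A s + B / s) = A (t - s)² / t`, so `t = s`, i.e. `x = s⁴ = B²/A²`, is the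
unique minimiser. Multiplying by `N^{-1/4} > 0` and adding `c` does not move it.
-/

open Real Set

theorem setOf_forall_le_eq_singleton_of_lt {α β : Type*} [Preorder β] {f : α → β} {s : Set α} {a : α}
    (ha : a ∈ s) (hlt : ∀ x ∈ s, x ≠ a → f a < f x) :
    {x ∈ s | ∀ y ∈ s, f x ≤ f y} = {a} := by
  ext x
  refine ⟨fun ⟨hx, hmin⟩ => ?_, ?_⟩
  · by_contra hxa
    exact (hlt x hx hxa).not_ge (hmin a ha)
  · rintro rfl
    exact ⟨ha, fun y hy => (eq_or_ne y x).elim (fun h => h ▸ le_rfl) fun h => (hlt y hy h).le⟩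

theorem setOf_forall_mul_add_le_eq {α 𝕜 : Type*} [Field 𝕜] [LinearOrder 𝕜] [IsStrictOrderedRing 𝕜]
    (f : α → 𝕜) (s : Set α) {a : 𝕜} (ha : 0 < a) (c : 𝕜) :
    {x ∈ s | ∀ y ∈ s, a * f x + c ≤ a * f y + c} = {x ∈ s | ∀ y ∈ s, f x ≤ f y} := by
  simp only [add_le_add_iff_right, mul_le_mul_iff_right₀ ha]

theorem mul_add_div_sub_mul_add_div {𝕜 : Type*} [Field 𝕜] (A s t : 𝕜) (ht : t ≠ 0) :
    (A * t + A * s ^ 2 / t) - (A * s + A * s ^ 2 / s) = A * (t - s) ^ 2 / t := by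
  field_simp
  ring

theorem mul_add_div_lt_mul_add_div {𝕜 : Type*} [Field 𝕜] [LinearOrder 𝕜] [IsStrictOrderedRing 𝕜]
    {A B s t : 𝕜} (hA : 0 < A) (ht : 0 < t) (hts : t ≠ s) (hB : B = A * s ^ 2) :
    A * s + B / s < A * t + B / t := by
  have hdiff := mul_add_div_sub_mul_add_div A s t ht.ne'
  have : 0 < A * (t - s) ^ 2 / t := by
    have := sub_ne_zero.mpr hts
    positivity
  subst hB
  linarith

theorem setOf_forall_mul_rpow_quarter_add_le_eq {A B : ℝ} (hA : 0 < A) (hB : 0 < B) :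
    {x ∈ Ioi (0 : ℝ) | ∀ y ∈ Ioi (0 : ℝ),
        A * x ^ ((1 : ℝ) / 4) + B * x ^ (-(1 : ℝ) / 4)
          ≤ A * y ^ ((1 : ℝ) / 4) + B * y ^ (-(1 : ℝ) / 4)} = {B ^ 2 / A ^ 2} := by
  have hBA : 0 < B / A := div_pos hB hA
  set s := √(B / A)
  have hs : 0 < s := sqrt_pos.mpr hBA
  have hB_eq : B = A * s ^ 2 := by
    rw [sq_sqrt hBA.le]
    field_simp
  have hx₀ : B ^ 2 / A ^ 2 = s ^ 4 := by
    rw [← div_pow, ← sq_sqrt hBA.le, ← pow_mul]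
  have hquarter : ((1 : ℝ) / 4) = ((4 : ℕ) : ℝ)⁻¹ := by norm_num
  have hf : ∀ x : ℝ, 0 < x → A * x ^ ((1 : ℝ) / 4) + B * x ^ (-(1 : ℝ) / 4)
      = A * x ^ ((1 : ℝ) / 4) + B / x ^ ((1 : ℝ) / 4) := fun x hx => by
    rw [neg_div, rpow_neg hx.le, div_eq_mul_inv B]
  rw [hx₀]
  refine setOf_forall_le_eq_singleton_of_lt
    (f := fun x => A * x ^ ((1 : ℝ) / 4) + B * x ^ (-(1 : ℝ) / 4)) (pow_pos hs 4) ?_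
  intro x hx hxs
  have hx : 0 < x := hx
  rw [hf x hx, hf _ (by positivity), hquarter, pow_rpow_inv_natCast hs.le (by norm_num)]
  refine mul_add_div_lt_mul_add_div hA (by positivity) (fun h => hxs ?_) hB_eq
  rw [← h, rpow_inv_natCast_pow hx.le (by norm_num)]

/-- The optimal class-to-sample ratio is invariant to the size of the pre-training
dataset: for any `N₁, N₂ > 0`, the set of minimizers over `(0, ∞)` of
`x ↦ Nᵢ^{-1/4}·(A·x^{1/4} + B·x^{-1/4}) + cᵢ` is the same, and equals `{B²/A²}`. -/
theorem optimal_ratio_invariant_to_dataset_size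
    (A B : ℝ) (hA : 0 < A) (hB : 0 < B)
    (c₁ c₂ N₁ N₂ : ℝ) (hN₁ : 0 < N₁) (hN₂ : 0 < N₂) :
    {x ∈ Set.Ioi (0 : ℝ) | ∀ y ∈ Set.Ioi (0 : ℝ),
        N₁ ^ (-(1 : ℝ) / 4) * (A * x ^ ((1 : ℝ) / 4) + B * x ^ (-(1 : ℝ) / 4)) + c₁
          ≤ N₁ ^ (-(1 : ℝ) / 4) * (A * y ^ ((1 : ℝ) / 4) + B * y ^ (-(1 : ℝ) / 4)) + c₁}
      = {x ∈ Set.Ioi (0 : ℝ) | ∀ y ∈ Set.Ioi (0 : ℝ),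
          N₂ ^ (-(1 : ℝ) / 4) * (A * x ^ ((1 : ℝ) / 4) + B * x ^ (-(1 : ℝ) / 4)) + c₂
            ≤ N₂ ^ (-(1 : ℝ) / 4) * (A * y ^ ((1 : ℝ) / 4) + B * y ^ (-(1 : ℝ) / 4)) + c₂} ∧
    {x ∈ Set.Ioi (0 : ℝ) | ∀ y ∈ Set.Ioi (0 : ℝ),
        N₁ ^ (-(1 : ℝ) / 4) * (A * x ^ ((1 : ℝ) / 4) + B * x ^ (-(1 : ℝ) / 4)) + c₁
          ≤ N₁ ^ (-(1 : ℝ) / 4) * (A * y ^ ((1 : ℝ) / 4) + B * y ^ (-(1 : ℝ) / 4)) + c₁}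
      = {B ^ 2 / A ^ 2} := by
  rw [setOf_forall_mul_add_le_eq _ _ (rpow_pos_of_pos hN₁ _),
    setOf_forall_mul_add_le_eq _ _ (rpow_pos_of_pos hN₂ _),
    setOf_forall_mul_rpow_quarter_add_le_eq hA hB]
  exact ⟨rfl, rfl⟩
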